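/- arXiv:2310.09196 — 6 statements merged into one kernel-verified Lean document; each statement's English description precedes it below -/
import Mathlib

section
/- Let V be a finite set, G a simple graph on V with closed neighborhoods N_v, and Π a partition of V with maximum disagreement φ(Π) = max_{v} |[v]_Π △ N_v|. If u, v ∈ V satisfy |N_u ∩ N_v| > 2·φ(Π), then u and v lie in the same block of Π. -/
/-! If `u` and `v` lay in different blocks, these blocks would be disjoint, so every common
neighbour of `u` and `v` is missing from `[u]` or from `[v]` and is counted in the disagreement
of `u` or of `v`; hence `|N_u ∩ N_v| ≤ 2 φ(Π)`. -/

open scoped symmDiff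

open Finset

variable {V : Type*} [Fintype V] [DecidableEq V]

/-- Closed neighborhood of `v`: `v` together with its adjacent vertices. -/
def nbhd (G : SimpleGraph V) [DecidableRel G.Adj] (v : V) : Finset V :=
  insert v (G.neighborFinset v)

/-- `P` encodes a partition of `V`, where `P v` is the block containing `v`. -/
def IsPartitionFun (P : V → Finset V) : Prop :=
  (∀ v, v ∈ P v) ∧ ∀ u v : V, u ∈ P v → P u = P v

/-- Maximum disagreement of the partition `P`. -/
def phi (G : SimpleGraph V) [DecidableRel G.Adj] (P : V → Finset V) : ℕ :=
  Finset.univ.sup fun v => ((P v) ∆ (nbhd G v)).card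

theorem Finset.card_inter_le_card_sdiff_add_card_sdiff {α : Type*} [DecidableEq α]
    {S T : Finset α} (hST : Disjoint S T) (A B : Finset α) :
    #(A ∩ B) ≤ #(A \ S) + #(B \ T) := by
  have hsub : A ∩ B ⊆ A \ S ∪ B \ T := by
    intro w hw
    rw [mem_inter] at hw
    by_cases hwS : w ∈ S
    · exact mem_union_right _ (mem_sdiff.2 ⟨hw.2, disjoint_left.1 hST hwS⟩)
    · exact mem_union_left _ (mem_sdiff.2 ⟨hw.1, hwS⟩)
  exact (card_le_card hsub).trans (card_union_le _ _)

theorem IsPartitionFun.disjoint_of_ne {α : Type*} {P : α → Finset α} (hP : IsPartitionFun P) {u v : α}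
    (huv : P u ≠ P v) : Disjoint (P u) (P v) :=
  disjoint_left.2 fun w hwu hwv => huv ((hP.2 w u hwu).symm.trans (hP.2 w v hwv))

theorem card_nbhd_sdiff_le_phi (G : SimpleGraph V) [DecidableRel G.Adj] (P : V → Finset V)
    (v : V) : #(nbhd G v \ P v) ≤ phi G P :=
  calc #(nbhd G v \ P v) ≤ #(P v ∆ nbhd G v) :=
        card_le_card (symmDiff_def (P v) (nbhd G v) ▸ le_sup_right)
    _ ≤ phi G P := le_sup (f := fun v => #(P v ∆ nbhd G v)) (mem_univ v)

theorem statement1 (G : SimpleGraph V) [DecidableRel G.Adj]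
    (P : V → Finset V) (hP : IsPartitionFun P) (u v : V)
    (h : 2 * phi G P < (nbhd G u ∩ nbhd G v).card) :
    P u = P v := by
  by_contra huv
  have hcommon := card_inter_le_card_sdiff_add_card_sdiff (hP.disjoint_of_ne huv)
    (nbhd G u) (nbhd G v)
  have hu := card_nbhd_sdiff_le_phi G P u
  have hv := card_nbhd_sdiff_le_phi G P v
  omega
end

section
/- Let V be a finite set, G a simple graph on V with closed neighborhoods N_v, Π a partition of V with maximum disagreement φ(Π), and v ∈ V with |N_v| > 4·φ(Π). Then [v]_Π = {u ∈ V : |N_u ∩ N_v| > |N_v|/2}. -/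
/-!
Write `φ = phi G P`; every vertex `w` has `|[w] \ N_w| + |N_w \ [w]| ≤ φ`.
If `u ∈ [v]`, then `[u] = [v]` and `N_v` is covered by `N_u ∩ N_v`, `N_v \ [v]` and `[v] \ N_u`,
so `|N_u ∩ N_v| ≥ |N_v| - 2φ > |N_v| / 2`. If `u ∉ [v]`, the blocks `[u]` and `[v]` are disjoint,
so `N_u ∩ N_v ⊆ (N_u \ [u]) ∪ (N_v \ [v])` has at most `2φ < |N_v| / 2` elements.
-/

open scoped symmDiff

open Finset

variable {V : Type*} [Fintype V] [DecidableEq V]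

namespace Finset

variable {α : Type*} [DecidableEq α]

theorem card_symmDiff_eq (s t : Finset α) : #(s ∆ t) = #(s \ t) + #(t \ s) := by
  rw [Finset.symmDiff_def, card_union_of_disjoint disjoint_sdiff_sdiff]

theorem card_le_card_inter_add_card_sdiff_add_card_sdiff (s t u : Finset α) :
    #t ≤ #(s ∩ t) + #(t \ u) + #(u \ s) := by
  have hcover : t ⊆ s ∩ t ∪ t \ u ∪ u \ s := by
    intro x hx
    by_cases hxu : x ∈ u <;> by_cases hxs : x ∈ s <;> simp [hx, hxu, hxs]
  calc #t ≤ #(s ∩ t ∪ t \ u ∪ u \ s) := card_le_card hcover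
    _ ≤ #(s ∩ t) + #(t \ u) + #(u \ s) :=
      (card_union_le _ _).trans (Nat.add_le_add_right (card_union_le _ _) _)

theorem card_inter_le_card_sdiff_add_card_sdiff_of_disjoint {s t u w : Finset α}
    (h : Disjoint u w) : #(s ∩ t) ≤ #(s \ u) + #(t \ w) := by
  have hcover : s ∩ t ⊆ s \ u ∪ t \ w := by
    intro x hx
    rw [mem_inter] at hx
    by_cases hxu : x ∈ u
    · simp [hx.2, disjoint_left.mp h hxu]
    · simp [hx.1, hxu]
  exact (card_le_card hcover).trans (card_union_le _ _)

end Finset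

theorem IsPartitionFun.disjoint_of_notMem {α : Type*} {P : α → Finset α} (hP : IsPartitionFun P)
    {u v : α} (huv : u ∉ P v) : Disjoint (P u) (P v) := by
  refine disjoint_left.mpr fun x hxu hxv => huv ?_
  rw [← hP.2 x v hxv, hP.2 x u hxu]
  exact hP.1 u

theorem card_sdiff_nbhd_add_card_nbhd_sdiff_le_phi (G : SimpleGraph V) [DecidableRel G.Adj]
    (P : V → Finset V) (w : V) : #(P w \ nbhd G w) + #(nbhd G w \ P w) ≤ phi G P := by
  rw [← card_symmDiff_eq]
  exact le_sup (f := fun w => #(P w ∆ nbhd G w)) (mem_univ w)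

theorem statement6 (G : SimpleGraph V) [DecidableRel G.Adj]
    (P : V → Finset V) (hP : IsPartitionFun P) (v : V)
    (hv : 4 * phi G P < (nbhd G v).card) :
    P v = Finset.univ.filter fun u => (nbhd G v).card < 2 * (nbhd G u ∩ nbhd G v).card := by
  ext u
  simp only [mem_filter, mem_univ, true_and]
  have hu_bound := card_sdiff_nbhd_add_card_nbhd_sdiff_le_phi G P u
  have hv_bound := card_sdiff_nbhd_add_card_nbhd_sdiff_le_phi G P v
  constructor
  · intro hu
    have hcover := card_le_card_inter_add_card_sdiff_add_card_sdiff (nbhd G u) (nbhd G v) (P u)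
    rw [hP.2 u v hu] at hcover hu_bound
    omega
  · contrapose
    intro hu
    have hinter := card_inter_le_card_sdiff_add_card_sdiff_of_disjoint (s := nbhd G u)
      (t := nbhd G v) (hP.disjoint_of_notMem hu)
    omega
end

section
/- Let V be a finite set, G a simple graph on V with closed neighborhoods N_v, and d ∈ ℕ. Define the auxiliary graph G_d on V with an edge between u and v whenever |N_u ∩ N_v| > 2d. If Π is any partition of V with φ(Π) ≤ d, then any two vertices u, v lying in the same connected component of G_d lie in the same block of Π. In other words, the partition Π_d of V into connected components of G_d refines Π. -/
open scoped symmDiff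

open Finset

variable {V : Type*} [Fintype V] [DecidableEq V]

/-- Auxiliary graph `G_d`: edges are pairs whose closed neighborhoods intersect
in more than `2 * d` vertices. -/
def Gd (G : SimpleGraph V) [DecidableRel G.Adj] (d : ℕ) : SimpleGraph V :=
  SimpleGraph.fromRel fun u v => 2 * d < (nbhd G u ∩ nbhd G v).card

/-- The block of `v` in the partition of `V` into connected components of `G_d`. -/
def compBlock (G : SimpleGraph V) [DecidableRel G.Adj] (d : ℕ)
    [DecidableRel (Gd G d).Reachable] (v : V) : Finset V :=
  Finset.univ.filter fun u => (Gd G d).Reachable u v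

/-- The set `U^d_C` for the component `C` of `v`. -/
def Ud (G : SimpleGraph V) [DecidableRel G.Adj] (d : ℕ)
    [DecidableRel (Gd G d).Reachable] (v : V) : Finset V :=
  Finset.univ.filter fun x =>
    ∀ w ∈ compBlock G d x, ∀ u ∈ compBlock G d v, ((nbhd G w) ∆ (nbhd G u)).card ≤ 2 * d

/-!
If `P` has disagreement at most `d` and `u`, `v` lie in different blocks, then every common
closed neighbour of `u` and `v` lies outside the block of one of them, hence is charged to
`P u ∆ N_u` or to `P v ∆ N_v`; so `|N_u ∩ N_v| ≤ 2d`. Thus every edge of `G_d` stays inside a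
block of `P`, and so does every path.
-/

theorem Finset.card_inter_le_card_symmDiff_add_card_symmDiff {α : Type*} [DecidableEq α]
    {A B S T : Finset α} (hAB : Disjoint A B) : #(S ∩ T) ≤ #(A ∆ S) + #(B ∆ T) := by
  have hcover : S ∩ T ⊆ A ∆ S ∪ B ∆ T := by
    intro x hx
    rw [mem_inter] at hx
    by_cases hxA : x ∈ A
    · have hxB : x ∉ B := disjoint_left.1 hAB hxA
      simp [mem_symmDiff, hx.2, hxB]
    · simp [mem_symmDiff, hx.1, hxA]
  calc #(S ∩ T) ≤ #(A ∆ S ∪ B ∆ T) := card_le_card hcover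
    _ ≤ #(A ∆ S) + #(B ∆ T) := card_union_le _ _

theorem SimpleGraph.Reachable.apply_eq {α β : Type*} {H : SimpleGraph α} {f : α → β}
    (hf : ∀ a b, H.Adj a b → f a = f b) {u v : α} (h : H.Reachable u v) : f u = f v := by
  obtain ⟨w⟩ := h
  induction w with
  | nil => rfl
  | cons hadj _ ih => exact (hf _ _ hadj).trans ih

theorem card_symmDiff_nbhd_le_phi (G : SimpleGraph V) [DecidableRel G.Adj] (P : V → Finset V)
    (v : V) : #(P v ∆ nbhd G v) ≤ phi G P :=
  le_sup (f := fun w => #(P w ∆ nbhd G w)) (mem_univ v)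

theorem IsPartitionFun.card_nbhd_inter_le_of_ne {G : SimpleGraph V} [DecidableRel G.Adj] {d : ℕ}
    {P : V → Finset V} (hP : IsPartitionFun P) (hphi : phi G P ≤ d) {u v : V} (huv : P u ≠ P v) :
    #(nbhd G u ∩ nbhd G v) ≤ 2 * d := by
  have hu := card_symmDiff_nbhd_le_phi G P u
  have hv := card_symmDiff_nbhd_le_phi G P v
  have := card_inter_le_card_symmDiff_add_card_symmDiff (S := nbhd G u) (T := nbhd G v)
    (hP.disjoint_of_ne huv)
  omega

theorem IsPartitionFun.eq_of_gd_adj {G : SimpleGraph V} [DecidableRel G.Adj] {d : ℕ}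
    {P : V → Finset V} (hP : IsPartitionFun P) (hphi : phi G P ≤ d) {u v : V}
    (hadj : (Gd G d).Adj u v) : P u = P v := by
  by_contra huv
  have hle := hP.card_nbhd_inter_le_of_ne hphi huv
  rw [Gd, SimpleGraph.fromRel_adj, inter_comm (nbhd G v)] at hadj
  rcases hadj.2 with hlt | hlt <;> omega

theorem statement9 (G : SimpleGraph V) [DecidableRel G.Adj] (d : ℕ)
    (P : V → Finset V) (hP : IsPartitionFun P) (hphi : phi G P ≤ d)
    (u v : V) (h : (Gd G d).Reachable u v) :
    P u = P v :=
  h.apply_eq fun _ _ => hP.eq_of_gd_adj hphi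
end

section
/- Let V be a finite set, G a simple graph on V with closed neighborhoods N_v, and fix v ∈ V. Let C = {u ∈ V : 2·|N_u ∩ N_v| > |N_v|}. If there exists u ∈ C with 4·|N_u △ C| > |N_v|, then every partition Π of V satisfies 4·φ(Π) ≥ |N_v|; i.e., no partition has maximum disagreement strictly less than |N_v|/4. -/
/-!
If `4 φ(Π) < |N_v|`, the block of `v` is forced to be `C`. A vertex `w` in the block `B` of `v`
misses from `N_v` only elements of `N_v \ B` or of `B \ N_w`, at most `2 φ(Π)` of them, so it
shares more than half of `N_v`; a vertex `w` outside `B` has a block disjoint from `B`, so it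
meets `N_v` only in `(N_v \ B) ∪ (N_w \ [w])`, fewer than half of `N_v`. A vertex `u ∈ C` then
has block `C`, so `|N_u △ C| ≤ φ(Π) < |N_v| / 4`.
-/

open scoped symmDiff

open Finset

variable {V : Type*} [Fintype V] [DecidableEq V]

section FinsetCard

variable {α : Type*} [DecidableEq α]

lemma card_sdiff_le_card_sdiff_add_card_sdiff (s t u : Finset α) :
    #(s \ u) ≤ #(s \ t) + #(t \ u) :=
  (card_le_card (sdiff_triangle s t u)).trans (card_union_le _ _)

lemma card_inter_le_card_sdiff_add_card_sdiff {s t x y : Finset α} (hxy : Disjoint x y) :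
    #(s ∩ t) ≤ #(s \ x) + #(t \ y) := by
  refine (card_le_card fun a ha => ?_).trans (card_union_le _ _)
  rw [mem_inter] at ha
  by_cases hax : a ∈ x
  · exact mem_union_right _ (mem_sdiff.2 ⟨ha.2, disjoint_left.1 hxy hax⟩)
  · exact mem_union_left _ (mem_sdiff.2 ⟨ha.1, hax⟩)

end FinsetCard

namespace IsPartitionFun

variable {α : Type*} {P : α → Finset α}

lemma block_eq (hP : IsPartitionFun P) {u v : α} (h : u ∈ P v) : P u = P v :=
  hP.2 u v h

lemma disjoint_of_notMem_s13 (hP : IsPartitionFun P) {v w : α} (h : w ∉ P v) :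
    Disjoint (P v) (P w) :=
  disjoint_left.2 fun _ hxv hxw =>
    h ((hP.block_eq hxw).symm.trans (hP.block_eq hxv) ▸ hP.1 w)

end IsPartitionFun

section Disagreement

variable (G : SimpleGraph V) [DecidableRel G.Adj] (P : V → Finset V) (w : V)

lemma card_symmDiff_le_phi : #(P w ∆ nbhd G w) ≤ phi G P :=
  le_sup (f := fun w => #(P w ∆ nbhd G w)) (mem_univ w)

lemma card_sdiff_nbhd_le_phi : #(P w \ nbhd G w) ≤ phi G P :=
  (card_le_card (by rw [symmDiff_def]; exact subset_union_left)).trans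
    (card_symmDiff_le_phi G P w)

lemma card_nbhd_sdiff_le_phi_s13 : #(nbhd G w \ P w) ≤ phi G P :=
  (card_le_card (by rw [symmDiff_def]; exact subset_union_right)).trans
    (card_symmDiff_le_phi G P w)

variable {G P}

lemma mem_block_iff_of_four_mul_phi_lt (hP : IsPartitionFun P) {v : V}
    (hφ : 4 * phi G P < #(nbhd G v)) :
    w ∈ P v ↔ #(nbhd G v) < 2 * #(nbhd G w ∩ nbhd G v) := by
  constructor
  · intro hw
    have hfar : #(nbhd G v \ nbhd G w) ≤ 2 * phi G P := by
      have := card_sdiff_le_card_sdiff_add_card_sdiff (nbhd G v) (P v) (nbhd G w)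
      have := card_nbhd_sdiff_le_phi_s13 G P v
      have := card_sdiff_nbhd_le_phi G P w
      rw [hP.block_eq hw] at this
      omega
    have := card_inter_add_card_sdiff (nbhd G v) (nbhd G w)
    rw [inter_comm] at this
    omega
  · intro hw
    by_contra hwv
    have := card_inter_le_card_sdiff_add_card_sdiff (s := nbhd G w) (t := nbhd G v)
      (hP.disjoint_of_notMem_s13 hwv).symm
    have := card_nbhd_sdiff_le_phi_s13 G P v
    have := card_nbhd_sdiff_le_phi_s13 G P w
    omega

lemma block_eq_filter_of_four_mul_phi_lt (hP : IsPartitionFun P) {v : V}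
    (hφ : 4 * phi G P < #(nbhd G v)) :
    P v = univ.filter fun u => #(nbhd G v) < 2 * #(nbhd G u ∩ nbhd G v) := by
  ext w
  rw [mem_filter, mem_block_iff_of_four_mul_phi_lt w hP hφ]
  exact ⟨fun h => ⟨mem_univ w, h⟩, And.right⟩

end Disagreement

theorem statement13 (G : SimpleGraph V) [DecidableRel G.Adj] (v : V)
    (C : Finset V)
    (hC : C = Finset.univ.filter fun u => (nbhd G v).card < 2 * (nbhd G u ∩ nbhd G v).card)
    (h : ∃ u ∈ C, (nbhd G v).card < 4 * ((nbhd G u) ∆ C).card)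
    (P : V → Finset V) (hP : IsPartitionFun P) :
    (nbhd G v).card ≤ 4 * phi G P := by
  by_contra! hφ
  have hPv : P v = C := hC ▸ block_eq_filter_of_four_mul_phi_lt hP hφ
  obtain ⟨u, huC, hu⟩ := h
  have hPu : P u = C := (hP.block_eq (hPv ▸ huC)).trans hPv
  have := card_symmDiff_le_phi G P u
  rw [hPu, symmDiff_comm] at this
  omega
end

section
/- Let V be a finite set, let G⁺ and G⁻ be edge-disjoint simple graphs on V (positive and negative edges of a signed non-complete graph), and let N⁺_v, N⁻_v denote the respective closed positive and negative neighborhoods (with v ∈ N⁺_v). For a partition Π of V, define the disagreement of v as the number of w ≠ v such that either {v,w} is a positive edge and w ∉ [v]_Π, or {v,w} is a negative edge and w ∈ [v]_Π, and let φ(Π) be the maximum disagreement. If u, v ∈ V satisfy |(N⁺_u ∩ N⁻_v) ∪ (N⁻_u ∩ N⁺_v)| > 2·φ(Π), then u and v lie in distinct blocks of Π. -/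
open scoped symmDiff

open Finset

variable {V : Type*} [Fintype V] [DecidableEq V]

/-- Closed positive neighborhood of `v`. -/
def nbhdPos (Gp : SimpleGraph V) [DecidableRel Gp.Adj] (v : V) : Finset V :=
  insert v (Gp.neighborFinset v)

/-- Negative neighborhood of `v`. -/
def nbhdNeg (Gm : SimpleGraph V) [DecidableRel Gm.Adj] (v : V) : Finset V :=
  Gm.neighborFinset v

/-- Disagreement of `v` with the partition `P` in a signed (non-complete) graph. -/
def disagreeSigned (Gp Gm : SimpleGraph V) [DecidableRel Gp.Adj] [DecidableRel Gm.Adj]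
    (P : V → Finset V) (v : V) : ℕ :=
  (Finset.univ.filter fun w =>
    (Gp.Adj v w ∧ P w ≠ P v) ∨ (Gm.Adj v w ∧ P w = P v)).card

/-- Maximum disagreement in the signed setting. -/
def phiSigned (Gp Gm : SimpleGraph V) [DecidableRel Gp.Adj] [DecidableRel Gm.Adj]
    (P : V → Finset V) : ℕ :=
  Finset.univ.sup (disagreeSigned Gp Gm P)

section Disagreement

variable (Gp Gm : SimpleGraph V) [DecidableRel Gp.Adj] [DecidableRel Gm.Adj] (P : V → Finset V)

def disagreeSet (v : V) : Finset V :=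
  univ.filter fun w => (Gp.Adj v w ∧ P w ≠ P v) ∨ (Gm.Adj v w ∧ P w = P v)

theorem disagreeSigned_le_phiSigned (v : V) : disagreeSigned Gp Gm P v ≤ phiSigned Gp Gm P :=
  le_sup (mem_univ v)

variable {Gp Gm P}

-- `w` is a disagreement of `u` if it leaves the common block and of `v` if it stays.
theorem mem_disagreeSet_of_mem_nbhdPos_inter_nbhdNeg {u v w : V} (huv : P u = P v)
    (hw : w ∈ nbhdPos Gp u ∩ nbhdNeg Gm v) :
    w ∈ disagreeSet Gp Gm P u ∪ disagreeSet Gp Gm P v := by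
  simp only [nbhdPos, nbhdNeg, disagreeSet, mem_inter, mem_insert,
    SimpleGraph.mem_neighborFinset, mem_union, mem_filter, mem_univ, true_and] at hw ⊢
  obtain ⟨rfl | hpos, hneg⟩ := hw
  · exact Or.inr (Or.inr ⟨hneg, huv⟩)
  · by_cases hwu : P w = P u
    · exact Or.inr (Or.inr ⟨hneg, hwu.trans huv⟩)
    · exact Or.inl (Or.inl ⟨hpos, hwu⟩)

theorem card_cross_nbhd_le_of_eq (u v : V) (huv : P u = P v) :
    ((nbhdPos Gp u ∩ nbhdNeg Gm v) ∪ (nbhdNeg Gm u ∩ nbhdPos Gp v)).card ≤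
      disagreeSigned Gp Gm P u + disagreeSigned Gp Gm P v := by
  have hsub : (nbhdPos Gp u ∩ nbhdNeg Gm v) ∪ (nbhdNeg Gm u ∩ nbhdPos Gp v) ⊆
      disagreeSet Gp Gm P u ∪ disagreeSet Gp Gm P v := by
    refine union_subset (fun w hw ↦ mem_disagreeSet_of_mem_nbhdPos_inter_nbhdNeg huv hw)
      fun w hw ↦ ?_
    rw [inter_comm] at hw
    rw [union_comm]
    exact mem_disagreeSet_of_mem_nbhdPos_inter_nbhdNeg huv.symm hw
  calc _ ≤ (disagreeSet Gp Gm P u ∪ disagreeSet Gp Gm P v).card := card_le_card hsub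
    _ ≤ _ := card_union_le _ _

end Disagreement

theorem statement15_general (Gp Gm : SimpleGraph V) [DecidableRel Gp.Adj] [DecidableRel Gm.Adj]
    (P : V → Finset V) (u v : V)
    (h : 2 * phiSigned Gp Gm P <
      ((nbhdPos Gp u ∩ nbhdNeg Gm v) ∪ (nbhdNeg Gm u ∩ nbhdPos Gp v)).card) :
    P u ≠ P v := by
  intro huv
  have hu := disagreeSigned_le_phiSigned Gp Gm P u
  have hv := disagreeSigned_le_phiSigned Gp Gm P v
  have := card_cross_nbhd_le_of_eq (Gp := Gp) (Gm := Gm) u v huv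
  omega

theorem statement15 (Gp Gm : SimpleGraph V) [DecidableRel Gp.Adj] [DecidableRel Gm.Adj]
    (hdisj : ∀ u v : V, ¬ (Gp.Adj u v ∧ Gm.Adj u v))
    (P : V → Finset V) (hP : IsPartitionFun P) (u v : V)
    (h : 2 * phiSigned Gp Gm P <
      ((nbhdPos Gp u ∩ nbhdNeg Gm v) ∪ (nbhdNeg Gm u ∩ nbhdPos Gp v)).card) :
    P u ≠ P v :=
  statement15_general Gp Gm P u v h
end

section
/- Let V be a finite set, G a simple graph on V with edge set E and closed neighborhoods N_v, and θ positive weights defined on all pairs {v,w} of V (edges and non-edges). For a partition Π of V, define the weighted disagreement of v as the total weight θ_{vw} of edges {v,w} with w ∉ [v]_Π plus the total weight θ_{vw} of non-edges {v,w} (pairs with {v,w} ∉ E) with w ∈ [v]_Π; let φ_θ(Π) be the maximum weighted disagreement. If u, v ∈ V satisfy Σ_{w ∈ N_u ∩ N_v} min(θ_{uw}, θ_{vw}) > 2·φ_θ(Π), then u and v lie in the same block of Π. -/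
open scoped symmDiff

open Finset

variable {V : Type*} [Fintype V] [DecidableEq V]

/-- Weighted disagreement of v with the partition P:
total weight of edges leaving the block of v plus total weight of
non-edges inside the block of v. -/
def wdisagree (G : SimpleGraph V) [DecidableRel G.Adj] (θ : V → V → ℝ)
    (P : V → Finset V) (v : V) : ℝ :=
  ∑ w ∈ Finset.univ.filter (fun w => G.Adj v w ∧ w ∉ P v), θ v w +
  ∑ w ∈ Finset.univ.filter (fun w => w ≠ v ∧ ¬ G.Adj v w ∧ w ∈ P v), θ v w

/-- Maximum weighted disagreement. -/
noncomputable def phiW [Nonempty V] (G : SimpleGraph V) [DecidableRel G.Adj]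
    (θ : V → V → ℝ) (P : V → Finset V) : ℝ :=
  Finset.univ.sup' Finset.univ_nonempty (wdisagree G θ P)

theorem statement16 [Nonempty V] (G : SimpleGraph V) [DecidableRel G.Adj]
    (θ : V → V → ℝ) (hsymm : ∀ u v, θ u v = θ v u)
    (hpos : ∀ u v : V, u ≠ v → 0 < θ u v) (hself : ∀ v, θ v v = 0)
    (P : V → Finset V) (hP : IsPartitionFun P) (u v : V)
    (h : 2 * phiW G θ P < ∑ w ∈ nbhd G u ∩ nbhd G v, min (θ u w) (θ v w)) :
    P u = P v := by
  by_contra hne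
  have hdisj : ∀ w, w ∈ P u → w ∉ P v := by
    intro w hwu hwv
    exact hne ((hP.2 w u hwu).symm.trans (hP.2 w v hwv))
  have hsplit : ∑ w ∈ nbhd G u ∩ nbhd G v, min (θ u w) (θ v w)
      = ∑ w ∈ (nbhd G u ∩ nbhd G v).filter (· ∈ P u), min (θ u w) (θ v w)
      + ∑ w ∈ (nbhd G u ∩ nbhd G v).filter (· ∉ P u), min (θ u w) (θ v w) :=
    (Finset.sum_filter_add_sum_filter_not _ _ _).symm
  -- bound for the S part (w ∉ P u): contributes to wdisagree u
  have hSsub : (nbhd G u ∩ nbhd G v).filter (· ∉ P u)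
      ⊆ Finset.univ.filter (fun w => G.Adj u w ∧ w ∉ P u) := by
    intro w hw
    simp only [Finset.mem_filter, Finset.mem_inter, Finset.mem_univ, true_and] at hw ⊢
    obtain ⟨⟨hwu, _⟩, hnp⟩ := hw
    rcases Finset.mem_insert.mp hwu with rfl | hadj
    · exact absurd (hP.1 _) hnp
    · exact ⟨(SimpleGraph.mem_neighborFinset G u w).mp hadj, hnp⟩
  have hS : ∑ w ∈ (nbhd G u ∩ nbhd G v).filter (· ∉ P u), min (θ u w) (θ v w)
      ≤ wdisagree G θ P u := by
    have h1 : ∑ w ∈ (nbhd G u ∩ nbhd G v).filter (· ∉ P u), min (θ u w) (θ v w)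
        ≤ ∑ w ∈ (nbhd G u ∩ nbhd G v).filter (· ∉ P u), θ u w :=
      Finset.sum_le_sum fun w _ => min_le_left _ _
    have h2 : ∑ w ∈ (nbhd G u ∩ nbhd G v).filter (· ∉ P u), θ u w
        ≤ ∑ w ∈ Finset.univ.filter (fun w => G.Adj u w ∧ w ∉ P u), θ u w := by
      refine Finset.sum_le_sum_of_subset_of_nonneg hSsub fun w hw _ => ?_
      simp only [Finset.mem_filter] at hw
      exact (hpos u w hw.2.1.ne).le
    have h3 : (0:ℝ) ≤ ∑ w ∈ Finset.univ.filter
        (fun w => w ≠ u ∧ ¬ G.Adj u w ∧ w ∈ P u), θ u w := by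
      refine Finset.sum_nonneg fun w hw => ?_
      simp only [Finset.mem_filter] at hw
      exact (hpos u w (Ne.symm hw.2.1)).le
    unfold wdisagree
    linarith
  -- bound for the T part (w ∈ P u, hence w ∉ P v): contributes to wdisagree v
  have hTsub : (nbhd G u ∩ nbhd G v).filter (· ∈ P u)
      ⊆ Finset.univ.filter (fun w => G.Adj v w ∧ w ∉ P v) := by
    intro w hw
    simp only [Finset.mem_filter, Finset.mem_inter, Finset.mem_univ, true_and] at hw ⊢
    obtain ⟨⟨_, hwv⟩, hp⟩ := hw
    have hnp := hdisj w hp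
    rcases Finset.mem_insert.mp hwv with rfl | hadj
    · exact absurd (hP.1 w) hnp
    · exact ⟨(SimpleGraph.mem_neighborFinset G v w).mp hadj, hnp⟩
  have hT : ∑ w ∈ (nbhd G u ∩ nbhd G v).filter (· ∈ P u), min (θ u w) (θ v w)
      ≤ wdisagree G θ P v := by
    have h1 : ∑ w ∈ (nbhd G u ∩ nbhd G v).filter (· ∈ P u), min (θ u w) (θ v w)
        ≤ ∑ w ∈ (nbhd G u ∩ nbhd G v).filter (· ∈ P u), θ v w :=
      Finset.sum_le_sum fun w _ => min_le_right _ _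
    have h2 : ∑ w ∈ (nbhd G u ∩ nbhd G v).filter (· ∈ P u), θ v w
        ≤ ∑ w ∈ Finset.univ.filter (fun w => G.Adj v w ∧ w ∉ P v), θ v w := by
      refine Finset.sum_le_sum_of_subset_of_nonneg hTsub fun w hw _ => ?_
      simp only [Finset.mem_filter] at hw
      exact (hpos v w hw.2.1.ne).le
    have h3 : (0:ℝ) ≤ ∑ w ∈ Finset.univ.filter
        (fun w => w ≠ v ∧ ¬ G.Adj v w ∧ w ∈ P v), θ v w := by
      refine Finset.sum_nonneg fun w hw => ?_
      simp only [Finset.mem_filter] at hw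
      exact (hpos v w (Ne.symm hw.2.1)).le
    unfold wdisagree
    linarith
  have hu : wdisagree G θ P u ≤ phiW G θ P :=
    Finset.le_sup' (wdisagree G θ P) (Finset.mem_univ u)
  have hv : wdisagree G θ P v ≤ phiW G θ P :=
    Finset.le_sup' (wdisagree G θ P) (Finset.mem_univ v)
  linarith
end
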